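/- Let H be a real normed vector space, λ ≥ 0 and η ≥ 0. The adaptive lasso functional thresholding rule satisfies conditions (ii) and (iii): for every Z ∈ H, if ‖Z‖ ≤ λ then s^AL_λ(Z) = 0, and ‖s^AL_λ(Z) − Z‖ ≤ λ. -/

import Mathlib

/-- Adaptive lasso functional thresholding rule:
`s^AL_λ(Z) = (1 − λ^{η+1}/‖Z‖^{η+1})₊ • Z` (and `0` at `Z = 0`), with real powers. -/
noncomputable def alThresh {H : Type*} [NormedAddCommGroup H] [NormedSpace ℝ H]
    (lam eta : ℝ) (Z : H) : H :=
  (max (1 - lam ^ (eta + 1) / ‖Z‖ ^ (eta + 1)) 0) • Z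

/-! For `Z ≠ 0` the shrinkage factor is `(1 - t)₊` with `t = (λ/‖Z‖)^{η+1}`, so that
`‖s^AL_λ(Z) - Z‖ = min t 1 · ‖Z‖`. This is at most `‖Z‖ ≤ λ` when `‖Z‖ ≤ λ`; otherwise
`λ/‖Z‖ < 1` and `η + 1 ≥ 1` give `t ≤ λ/‖Z‖`, i.e. `t · ‖Z‖ ≤ λ`. -/

theorem Real.rpow_div_rpow_mul_le {a b p : ℝ} (ha : 0 ≤ a) (hab : a ≤ b) (hp : 1 ≤ p) :
    a ^ p / b ^ p * b ≤ a := by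
  rcases (ha.trans hab).eq_or_lt with rfl | hb
  · rw [mul_zero]; exact ha
  · calc a ^ p / b ^ p * b = (a / b) ^ p * b := by rw [Real.div_rpow ha hb.le]
      _ ≤ a / b * b := by
          gcongr
          exact Real.rpow_le_self_of_le_one (by positivity) ((div_le_one hb).mpr hab) hp
      _ = a := div_mul_cancel₀ a hb.ne'

section alThresh

variable {H : Type*} [NormedAddCommGroup H] [NormedSpace ℝ H] {lam eta : ℝ}

theorem alThresh_eq_zero_of_norm_le (heta : 0 ≤ eta + 1) {Z : H} (hZ : ‖Z‖ ≤ lam) :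
    alThresh lam eta Z = 0 := by
  rcases eq_or_ne Z 0 with rfl | hZ0
  · simp [alThresh]
  have hZpos : 0 < ‖Z‖ ^ (eta + 1) := Real.rpow_pos_of_pos (norm_pos_iff.mpr hZ0) _
  have hratio : 1 ≤ lam ^ (eta + 1) / ‖Z‖ ^ (eta + 1) :=
    (one_le_div hZpos).mpr (Real.rpow_le_rpow (norm_nonneg Z) hZ heta)
  rw [alThresh, max_eq_right (by linarith), zero_smul]

theorem norm_alThresh_sub_self (hlam : 0 ≤ lam) (Z : H) :
    ‖alThresh lam eta Z - Z‖ = min (lam ^ (eta + 1) / ‖Z‖ ^ (eta + 1)) 1 * ‖Z‖ := by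
  rw [alThresh]
  set t := lam ^ (eta + 1) / ‖Z‖ ^ (eta + 1)
  have ht : 0 ≤ t := div_nonneg (Real.rpow_nonneg hlam _) (Real.rpow_nonneg (norm_nonneg Z) _)
  have hfactor : max (1 - t) 0 - 1 = -min t 1 := by
    rw [← max_sub_sub_right, sub_sub_cancel_left, zero_sub, max_neg_neg]
  have hdiff : max (1 - t) 0 • Z - Z = (-min t 1) • Z := by rw [← hfactor, sub_smul, one_smul]
  rw [hdiff, norm_smul, Real.norm_eq_abs, abs_neg, abs_of_nonneg (le_min ht zero_le_one)]

theorem norm_alThresh_sub_self_le (hlam : 0 ≤ lam) (heta : 0 ≤ eta) (Z : H) :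
    ‖alThresh lam eta Z - Z‖ ≤ lam := by
  rw [norm_alThresh_sub_self hlam]
  rcases le_or_gt ‖Z‖ lam with hZ | hZ
  · calc _ ≤ 1 * ‖Z‖ := by gcongr; exact min_le_right _ _
      _ ≤ lam := by rwa [one_mul]
  · calc _ ≤ lam ^ (eta + 1) / ‖Z‖ ^ (eta + 1) * ‖Z‖ := by gcongr; exact min_le_left _ _
      _ ≤ lam := Real.rpow_div_rpow_mul_le hlam hZ.le (by linarith)

end alThresh

theorem alThresh_conditions_ii_iii {H : Type*} [NormedAddCommGroup H] [NormedSpace ℝ H]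
    (lam eta : ℝ) (hlam : 0 ≤ lam) (heta : 0 ≤ eta) :
    ∀ Z : H, (‖Z‖ ≤ lam → alThresh lam eta Z = 0) ∧ ‖alThresh lam eta Z - Z‖ ≤ lam := fun Z =>
  ⟨alThresh_eq_zero_of_norm_le (by linarith), norm_alThresh_sub_self_le hlam heta Z⟩
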